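/- arXiv:2203.01494 — 5 statements merged into one kernel-verified Lean document; each statement's English description precedes it below -/
import Mathlib

section
/- Let ν > 0, 0 < m_min < m_max, and δ_S* > 0. Define δ_D* = (4ν²·m_min·m_max + ν·(m_min + m_max)·δ_S*) / (ν·(m_min + m_max) + δ_S*). Then the function ρ̂(δ_D, m) = ((2νm − δ_D)/(2νm + δ_S*))² satisfies ρ̂(δ_D*, m_min) = ρ̂(δ_D*, m_max), i.e. δ_D* equilibrates the squared convergence factor at the two endpoint frequencies. -/
/-! Writing `a = 2 ν m_min`, `b = 2 ν m_max`, the condition that the convergence factors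
`(a - δ) / (a + δ_S*)` and `(b - δ) / (b + δ_S*)` be opposite is linear in `δ`, with solution
`(2ab + (a + b) δ_S*) / (a + b + 2 δ_S*)`; this is `δ_D*` after cancelling a factor `ν / 2`.
Opposite factors have equal squares. -/

def equilibriumParam {K : Type*} [Field K] (a b s : K) : K :=
  (2 * a * b + (a + b) * s) / (a + b + 2 * s)

theorem sub_equilibriumParam_div_eq_neg {K : Type*} [Field K] {a b s : K}
    (ha : a + s ≠ 0) (hb : b + s ≠ 0) (hab : a + b + 2 * s ≠ 0) :
    (a - equilibriumParam a b s) / (a + s) = -((b - equilibriumParam a b s) / (b + s)) := by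
  unfold equilibriumParam
  field_simp
  ring

theorem stmt_3 (ν mmin mmax δS : ℝ) (hν : 0 < ν) (hmin : 0 < mmin)
    (hlt : mmin < mmax) (hδS : 0 < δS) :
    let δD := (4 * ν ^ 2 * mmin * mmax + ν * (mmin + mmax) * δS) /
      (ν * (mmin + mmax) + δS)
    ((2 * ν * mmin - δD) / (2 * ν * mmin + δS)) ^ 2 =
      ((2 * ν * mmax - δD) / (2 * ν * mmax + δS)) ^ 2 := by
  intro δD
  have hmax : 0 < mmax := hmin.trans hlt
  have hδD : δD = equilibriumParam (2 * ν * mmin) (2 * ν * mmax) δS := by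
    have : ν * (mmin + mmax) + δS ≠ 0 := by positivity
    unfold δD equilibriumParam
    field_simp
    ring
  rw [hδD, sub_equilibriumParam_div_eq_neg (by positivity) (by positivity) (by positivity), neg_sq]
end

section
/- Let ν > 0, 0 < m_min < m_max, δ_S* > 0, and let δ_D* = (4ν²·m_min·m_max + ν·(m_min + m_max)·δ_S*) / (ν·(m_min + m_max) + δ_S*). Then ρ(δ_S*, δ_D*, m_min) < 1 and ρ(δ_S*, δ_D*, m_max) < 1, where ρ(δ_S, δ_D, m) = |2νm − δ_D|/(2νm + δ_S). -/
/-!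
With `a = 2ν m_min + δ_S` and `b = 2ν m_max + δ_S`, the optimized parameter satisfies the two
identities `δ_D + δ_S = a b / (ν (m_min + m_max) + δ_S)` and
`4ν m + δ_S - δ_D = (2ν m + δ_S)² / (ν (m_min + m_max) + δ_S)` for `m ∈ {m_min, m_max}`.
Both right-hand sides are positive, i.e. `-δ_S < δ_D < 4ν m + δ_S`, which is exactly
`|2ν m - δ_D| < 2ν m + δ_S`.
-/

/-- The convergence factor `ρ(δ_S, δ_D, m)` of the Robin–Robin iteration at frequency `m`. -/
noncomputable def robinConvFactor (ν δS δD m : ℝ) : ℝ :=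
  |2 * ν * m - δD| / (2 * ν * m + δS)

/-- The Darcy Robin parameter `δ_D*` equilibrating `ρ` at the frequencies `m` and `m'`. -/
noncomputable def optimalDarcyParam (ν m m' δS : ℝ) : ℝ :=
  (4 * ν ^ 2 * m * m' + ν * (m + m') * δS) / (ν * (m + m') + δS)

lemma optimalDarcyParam_comm (ν m m' δS : ℝ) :
    optimalDarcyParam ν m m' δS = optimalDarcyParam ν m' m δS := by
  unfold optimalDarcyParam
  ring

lemma robinConvFactor_lt_one_iff {ν δS δD m : ℝ} (h : 0 < 2 * ν * m + δS) :
    robinConvFactor ν δS δD m < 1 ↔ -δS < δD ∧ δD < 4 * ν * m + δS := by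
  rw [robinConvFactor, div_lt_one h, abs_sub_lt_iff]
  constructor <;> rintro ⟨h₁, h₂⟩ <;> constructor <;> linarith

section optimalDarcyParam

variable {ν m m' δS : ℝ}

lemma optimalDarcyParam_add (h : ν * (m + m') + δS ≠ 0) :
    optimalDarcyParam ν m m' δS + δS =
      (2 * ν * m + δS) * (2 * ν * m' + δS) / (ν * (m + m') + δS) := by
  unfold optimalDarcyParam
  field_simp
  ring

lemma sub_optimalDarcyParam (h : ν * (m + m') + δS ≠ 0) :
    4 * ν * m + δS - optimalDarcyParam ν m m' δS =
      (2 * ν * m + δS) ^ 2 / (ν * (m + m') + δS) := by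
  unfold optimalDarcyParam
  field_simp
  ring

lemma robinConvFactor_optimalDarcyParam_lt_one (hm : 0 < 2 * ν * m + δS)
    (hm' : 0 < 2 * ν * m' + δS) :
    robinConvFactor ν δS (optimalDarcyParam ν m m' δS) m < 1 := by
  have hden : 0 < ν * (m + m') + δS := by linarith
  have hlower : 0 < optimalDarcyParam ν m m' δS + δS := by
    rw [optimalDarcyParam_add hden.ne']
    positivity
  have hupper : 0 < 4 * ν * m + δS - optimalDarcyParam ν m m' δS := by
    rw [sub_optimalDarcyParam hden.ne']
    positivity
  exact (robinConvFactor_lt_one_iff hm).2 ⟨by linarith, by linarith⟩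

end optimalDarcyParam

theorem stmt_4 (ν mmin mmax δS : ℝ) (hν : 0 < ν) (hmin : 0 < mmin)
    (hlt : mmin < mmax) (hδS : 0 < δS) :
    let δD := (4 * ν ^ 2 * mmin * mmax + ν * (mmin + mmax) * δS) /
      (ν * (mmin + mmax) + δS)
    |2 * ν * mmin - δD| / (2 * ν * mmin + δS) < 1 ∧
    |2 * ν * mmax - δD| / (2 * ν * mmax + δS) < 1 := by
  have hmax : 0 < mmax := hmin.trans hlt
  have hpos_min : 0 < 2 * ν * mmin + δS := by positivity
  have hpos_max : 0 < 2 * ν * mmax + δS := by positivity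
  refine ⟨robinConvFactor_optimalDarcyParam_lt_one hpos_min hpos_max, ?_⟩
  have h := robinConvFactor_optimalDarcyParam_lt_one hpos_max hpos_min
  rwa [← optimalDarcyParam_comm] at h
end

section
/- Let ν > 0 and δ_S* > 0 be fixed, and 0 < m_min < m_max. The function δ_D ↦ max{ρ̂(δ_D, m_min), ρ̂(δ_D, m_max)}, where ρ̂(δ_D, m) = ((2νm − δ_D)/(2νm + δ_S*))², equals ρ̂(δ_D, m_max) for δ_D ≤ δ_D* and equals ρ̂(δ_D, m_min) for δ_D > δ_D*, where δ_D* = (4ν²·m_min·m_max + ν·(m_min + m_max)·δ_S*)/(ν·(m_min + m_max) + δ_S*). Consequently δ_D* minimizes δ_D ↦ max{ρ̂(δ_D, m_min), ρ̂(δ_D, m_max)} over δ_D > 0. -/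
/-!
Write `a = 2ν·m_min`, `b = 2ν·m_max`, `s = δ_S*` and `f_c(δ) = ((c - δ)/(c + s))²`. Then
`f_b(δ) - f_a(δ) = (b - a)(s + δ)(a + b + 2s)(δ* - δ) / ((a + s)²(b + s)²)` with
`δ* = (2ab + s(a + b))/(a + b + 2s)`, which is the paper's `δ_D*`; so for `δ > -s` the larger of
the two factors is `f_b` left of `δ*` and `f_a` right of it. Since `a ≤ δ* ≤ b` and `f_c` is a
parabola with vertex `c`, moving `δ` away from `δ*` increases the dominant factor, so the
maximum is smallest at `δ*`, where the two factors equioscillate.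
-/

open Set

noncomputable section

-- `convFactor s c δ` is `ρ̂(δ, m)` with `c = 2νm` and `s = δ_S*`.
def convFactor (s c δ : ℝ) : ℝ := ((c - δ) / (c + s)) ^ 2

def convFactorCrossing (s a b : ℝ) : ℝ := (2 * a * b + s * (a + b)) / (a + b + 2 * s)

end

section

variable {s a b c δ : ℝ}

theorem convFactor_antitoneOn : AntitoneOn (convFactor s c) (Iic c) := by
  intro x hx y hy hxy
  rw [mem_Iic] at hx hy
  unfold convFactor
  rw [div_pow, div_pow]
  gcongr

theorem convFactor_monotoneOn : MonotoneOn (convFactor s c) (Ici c) := by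
  intro x hx y hy hxy
  rw [mem_Ici] at hx hy
  have hsq : (c - x) ^ 2 ≤ (c - y) ^ 2 := by nlinarith
  unfold convFactor
  rw [div_pow, div_pow]
  gcongr

theorem convFactor_sub_convFactor (ha : a + s ≠ 0) (hb : b + s ≠ 0) (hab : a + b + 2 * s ≠ 0) :
    convFactor s b δ - convFactor s a δ =
      (b - a) * (s + δ) * (a + b + 2 * s) * (convFactorCrossing s a b - δ) /
        ((a + s) ^ 2 * (b + s) ^ 2) := by
  have hcross : (a + b + 2 * s) * convFactorCrossing s a b = 2 * a * b + s * (a + b) :=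
    mul_div_cancel₀ _ hab
  unfold convFactor
  field_simp
  linear_combination -(b - a) * (s + δ) * hcross

theorem left_le_convFactorCrossing (ha : 0 < a + s) (hab : a ≤ b) :
    a ≤ convFactorCrossing s a b := by
  rw [convFactorCrossing, le_div_iff₀ (by linarith)]
  nlinarith

theorem convFactorCrossing_le_right (ha : 0 < a + s) (hab : a ≤ b) :
    convFactorCrossing s a b ≤ b := by
  rw [convFactorCrossing, div_le_iff₀ (by linarith)]
  nlinarith

theorem convFactor_le_convFactor_of_le_crossing (ha : 0 < a + s) (hab : a < b) (hδ : -s < δ)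
    (h : δ ≤ convFactorCrossing s a b) : convFactor s a δ ≤ convFactor s b δ := by
  rw [← sub_nonneg, convFactor_sub_convFactor (by linarith) (by linarith) (by linarith)]
  have : 0 < b - a := by linarith
  have : 0 < s + δ := by linarith
  have : 0 < a + b + 2 * s := by linarith
  have : 0 ≤ convFactorCrossing s a b - δ := by linarith
  positivity

theorem convFactor_le_convFactor_of_crossing_le (ha : 0 < a + s) (hab : a < b) (hδ : -s < δ)
    (h : convFactorCrossing s a b ≤ δ) : convFactor s b δ ≤ convFactor s a δ := by
  rw [← sub_nonpos, convFactor_sub_convFactor (by linarith) (by linarith) (by linarith)]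
  have : 0 < b - a := by linarith
  have : 0 < s + δ := by linarith
  have : 0 < a + b + 2 * s := by linarith
  exact div_nonpos_of_nonpos_of_nonneg
    (mul_nonpos_of_nonneg_of_nonpos (by positivity) (by linarith)) (by positivity)

theorem convFactor_crossing_eq (ha : 0 < a + s) (hab : a ≤ b) :
    convFactor s a (convFactorCrossing s a b) = convFactor s b (convFactorCrossing s a b) := by
  rw [eq_comm, ← sub_eq_zero, convFactor_sub_convFactor (by linarith) (by linarith) (by linarith),
    sub_self, mul_zero, zero_div]

theorem max_convFactor_crossing_le (ha : 0 < a + s) (hab : a ≤ b) (δ : ℝ) :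
    max (convFactor s a (convFactorCrossing s a b)) (convFactor s b (convFactorCrossing s a b)) ≤
      max (convFactor s a δ) (convFactor s b δ) := by
  have hlow := left_le_convFactorCrossing ha hab
  have hhigh := convFactorCrossing_le_right ha hab
  rw [convFactor_crossing_eq ha hab, max_self]
  rcases le_total δ (convFactorCrossing s a b) with hle | hge
  · exact le_max_of_le_right <| convFactor_antitoneOn (hle.trans hhigh) hhigh hle
  · rw [← convFactor_crossing_eq ha hab]
    exact le_max_of_le_left <| convFactor_monotoneOn hlow (hlow.trans hge) hge

end

theorem stmt_7 (ν mmin mmax δS : ℝ) (hν : 0 < ν) (hmin : 0 < mmin)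
    (hlt : mmin < mmax) (hδS : 0 < δS) :
    let ρhat : ℝ → ℝ → ℝ := fun δD m => ((2 * ν * m - δD) / (2 * ν * m + δS)) ^ 2
    let δDstar := (4 * ν ^ 2 * mmin * mmax + ν * (mmin + mmax) * δS) /
      (ν * (mmin + mmax) + δS)
    (∀ δD : ℝ, 0 < δD → δD ≤ δDstar →
        max (ρhat δD mmin) (ρhat δD mmax) = ρhat δD mmax) ∧
    (∀ δD : ℝ, δDstar < δD →
        max (ρhat δD mmin) (ρhat δD mmax) = ρhat δD mmin) ∧
    (∀ δD : ℝ, 0 < δD →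
        max (ρhat δDstar mmin) (ρhat δDstar mmax) ≤
          max (ρhat δD mmin) (ρhat δD mmax)) := by
  intro ρhat δDstar
  have hρ : ∀ δ m, ρhat δ m = convFactor δS (2 * ν * m) δ := fun _ _ => rfl
  have hstar : δDstar = convFactorCrossing δS (2 * ν * mmin) (2 * ν * mmax) := by
    simp only [δDstar, convFactorCrossing]
    field_simp
    ring
  have ha : 0 < 2 * ν * mmin + δS := by positivity
  have hab : 2 * ν * mmin < 2 * ν * mmax := by gcongr
  have hlow := left_le_convFactorCrossing ha hab.le
  simp only [hρ, hstar]
  refine ⟨fun δ hδ hle => max_eq_right ?_, fun δ hgt => max_eq_left ?_,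
    fun δ _ => max_convFactor_crossing_le ha hab.le δ⟩
  · exact convFactor_le_convFactor_of_le_crossing ha hab (by linarith) hle
  · exact convFactor_le_convFactor_of_crossing_le ha hab (by linarith) hgt.le
end

section
/- For any vectors u_S, u_D and unit normals n_S = −n_D on an interface, and positive constants δ_S, δ_D, the algebraic system g_S = σ_n − δ_S·(u_S·n_S) and g_D = gφ − δ_D·(u_D·n_D), where σ_n denotes −n_S·(T·n_S), satisfies: the pair of conditions {u_S·n_S + u_D·n_D = 0 and σ_n = gφ} holds if and only if the pair of compatibility relations {g_D = g_S + (δ_S + δ_D)·(u_S·n_S) and g_S = g_D + (δ_S + δ_D)·(u_D·n_D)} holds. -/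
/-! Substituting the Robin traces, the two compatibility relations read
`φ - σn = δD (a + b)` and `σn - φ = δS (a + b)`. Their sum gives `(δS + δD)(a + b) = 0`,
so both the flux `a + b` and the jump `σn - φ` vanish. -/

theorem eq_zero_and_eq_zero_iff_of_add_ne_zero {R : Type*} [CommRing R] [NoZeroDivisors R]
    {s t x y : R} (hst : s + t ≠ 0) :
    (x = 0 ∧ y = 0) ↔ (-y = t * x ∧ y = s * x) := by
  constructor
  · rintro ⟨rfl, rfl⟩
    simp
  · rintro ⟨h₁, h₂⟩
    have hsum : (s + t) * x = 0 := by linear_combination -h₁ - h₂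
    have hx : x = 0 := (mul_eq_zero.mp hsum).resolve_left hst
    exact ⟨hx, by rw [h₂, hx, mul_zero]⟩

theorem stmt_16 (a b σn φ gS gD δS δD : ℝ)
    (hδS : 0 < δS) (hδD : 0 < δD)
    (hgS : gS = σn - δS * a) (hgD : gD = φ - δD * b) :
    (a + b = 0 ∧ σn = φ) ↔
      (gD = gS + (δS + δD) * a ∧ gS = gD + (δS + δD) * b) := by
  subst hgS hgD
  calc (a + b = 0 ∧ σn = φ) ↔ (a + b = 0 ∧ σn - φ = 0) := by rw [sub_eq_zero]
    _ ↔ (-(σn - φ) = δD * (a + b) ∧ σn - φ = δS * (a + b)) :=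
      eq_zero_and_eq_zero_iff_of_add_ne_zero (by positivity)
    _ ↔ _ := and_congr (by constructor <;> intro h <;> linarith)
      (by constructor <;> intro h <;> linarith)
end

section
/- Let ν > 0, 0 < m_min < m_max, and δ_S > 0. For the balanced parameter δ_D* = (4ν²·m_min·m_max + ν(m_min+m_max)·δ_S)/(ν(m_min+m_max) + δ_S), the common optimal convergence rate is ρ* = (2ν·m_max − δ_D*)/(2ν·m_max + δ_S) = (δ_D* − 2ν·m_min)/(2ν·m_min + δ_S), and 0 < ρ* < 1. -/
/-!
Balancing the two extreme factors `|2νm − δ_D| / (2νm + δ_S)` at `m_min` and `m_max` forces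
`δ_D*`, and both factors then simplify to the same rate `ν (m_max − m_min) / (ν (m_min + m_max) + δ_S)`,
which lies in `(0, 1)` because its denominator exceeds its numerator by `2ν m_min + δ_S > 0`.
-/

section Balanced

variable {K : Type*} [Field K]

def balancedDamping (ν m M s : K) : K :=
  (4 * ν ^ 2 * m * M + ν * (m + M) * s) / (ν * (m + M) + s)

def balancedRate (ν m M s : K) : K :=
  ν * (M - m) / (ν * (m + M) + s)

theorem sub_balancedDamping_div {ν m M s : K} (hden : ν * (m + M) + s ≠ 0)
    (hM : 2 * ν * M + s ≠ 0) :
    (2 * ν * M - balancedDamping ν m M s) / (2 * ν * M + s) = balancedRate ν m M s := by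
  unfold balancedDamping balancedRate
  field_simp
  ring

theorem balancedDamping_sub_div {ν m M s : K} (hden : ν * (m + M) + s ≠ 0)
    (hm : 2 * ν * m + s ≠ 0) :
    (balancedDamping ν m M s - 2 * ν * m) / (2 * ν * m + s) = balancedRate ν m M s := by
  rw [div_eq_iff hm]
  unfold balancedDamping balancedRate
  field_simp
  ring

end Balanced

theorem balancedRate_mem_Ioo {ν m M s : ℝ} (hν : 0 < ν) (hm : 0 ≤ m) (hmM : m < M)
    (hs : 0 < s) : balancedRate ν m M s ∈ Set.Ioo 0 1 := by
  have hden : 0 < ν * (m + M) + s := by nlinarith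
  refine ⟨div_pos (mul_pos hν (sub_pos.2 hmM)) hden, (div_lt_one hden).2 ?_⟩
  nlinarith

theorem stmt_19 (ν mmin mmax δS : ℝ) (hν : 0 < ν) (hmin : 0 < mmin)
    (hlt : mmin < mmax) (hδS : 0 < δS) :
    let δD := (4 * ν ^ 2 * mmin * mmax + ν * (mmin + mmax) * δS) /
      (ν * (mmin + mmax) + δS)
    let ρstar := (2 * ν * mmax - δD) / (2 * ν * mmax + δS)
    ρstar = (δD - 2 * ν * mmin) / (2 * ν * mmin + δS) ∧
    0 < ρstar ∧ ρstar < 1 := by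
  intro δD ρstar
  have hden : ν * (mmin + mmax) + δS ≠ 0 := by nlinarith
  have hmax : 2 * ν * mmax + δS ≠ 0 := by nlinarith
  have hmin' : 2 * ν * mmin + δS ≠ 0 := by positivity
  have hρ : ρstar = balancedRate ν mmin mmax δS := sub_balancedDamping_div hden hmax
  obtain ⟨hpos, hlt_one⟩ := balancedRate_mem_Ioo hν hmin.le hlt hδS
  exact ⟨hρ.trans (balancedDamping_sub_div hden hmin').symm, hρ ▸ hpos, hρ ▸ hlt_one⟩
end
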